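/- Let B be a nonempty finite set, w : B → ℝ a probability mass function with w k > 0 for every k ∈ B, s : B → ℝ, g : B → ℝ, a > 0, b ∈ ℝ, and for each m ≥ 1 let o_1, …, o_m be independent identically distributed B-valued random variables with P(o_j = k) = w k. Define U_m = a·b + (1/m) Σ_{j=1}^m (exp(s(o_j))/w(o_j)) · g(o_j) and V_m = a + (1/m) Σ_{j=1}^m exp(s(o_j))/w(o_j). Then lim_{m→∞} E[U_m / V_m] = (a·b + Σ_{k∈B} exp(s k) · g k) / (a + Σ_{k∈B} exp(s k)). -/

import Mathlib

/-!
Both `U_m - a b` and `V_m - a` are empirical means of i.i.d. bounded variables, so by the strong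
law of large numbers they converge almost surely to `∑ₖ exp(s k) g k` and `∑ₖ exp(s k)` (the
importance weights `1 / w` cancel the sampling probabilities), hence `U_m / V_m` converges almost
surely to the claimed ratio. Since `U_m / V_m` is a convex combination of `b` and the values
`g (o_j)`, it is bounded by `|b| + ∑ₖ |g k|`, and dominated convergence moves the limit inside the
expectation.
-/

open MeasureTheory ProbabilityTheory Filter Finset Topology

noncomputable def empiricalMean (x : ℕ → ℝ) (m : ℕ) : ℝ :=
  1 / (m : ℝ) * ∑ j ∈ range m, x j

lemma empiricalMean_nonneg {x : ℕ → ℝ} (hx : ∀ j, 0 ≤ x j) (m : ℕ) :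
    0 ≤ empiricalMean x m :=
  mul_nonneg (by positivity) (sum_nonneg fun j _ => hx j)

lemma abs_empiricalMean_mul_le {c x : ℕ → ℝ} {M : ℝ} (hc : ∀ j, 0 ≤ c j)
    (hx : ∀ j, |x j| ≤ M) (m : ℕ) :
    |empiricalMean (fun j => c j * x j) m| ≤ M * empiricalMean c m := by
  have hsum : |∑ j ∈ range m, c j * x j| ≤ ∑ j ∈ range m, c j * M :=
    (abs_sum_le_sum_abs _ _).trans <| sum_le_sum fun j _ => by
      rw [abs_mul, abs_of_nonneg (hc j)]
      exact mul_le_mul_of_nonneg_left (hx j) (hc j)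
  rw [← sum_mul] at hsum
  rw [empiricalMean, empiricalMean, abs_mul, abs_of_nonneg (by positivity)]
  calc 1 / (m : ℝ) * |∑ j ∈ range m, c j * x j|
      ≤ 1 / (m : ℝ) * ((∑ j ∈ range m, c j) * M) := by gcongr
    _ = M * (1 / (m : ℝ) * ∑ j ∈ range m, c j) := by ring

lemma abs_selfNormalizedRatio_le {a b M : ℝ} {c x : ℕ → ℝ} (ha : 0 < a) (hc : ∀ j, 0 ≤ c j)
    (hb : |b| ≤ M) (hx : ∀ j, |x j| ≤ M) (m : ℕ) :
    |(a * b + empiricalMean (fun j => c j * x j) m) / (a + empiricalMean c m)| ≤ M := by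
  have hden : 0 < a + empiricalMean c m := by linarith [empiricalMean_nonneg hc m]
  rw [abs_div, abs_of_pos hden, div_le_iff₀ hden]
  calc |a * b + empiricalMean (fun j => c j * x j) m|
      ≤ a * |b| + |empiricalMean (fun j => c j * x j) m| := by
        simpa [abs_mul, abs_of_pos ha] using abs_add_le (a * b) _
    _ ≤ a * M + M * empiricalMean c m := by
        gcongr
        exact abs_empiricalMean_mul_le hc hx m
    _ = M * (a + empiricalMean c m) := by ring

section Probability

variable {Ω B : Type*} [MeasurableSpace Ω] [MeasurableSpace B] [MeasurableSingletonClass B]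
  {μ : Measure Ω}

lemma measurable_empiricalMean {X : ℕ → Ω → ℝ} (hX : ∀ j, Measurable (X j)) (m : ℕ) :
    Measurable fun ω => empiricalMean (X · ω) m :=
  (Finset.measurable_sum _ fun j _ => hX j).const_mul _

lemma identDistrib_of_measure_eq [Countable B] {X Y : Ω → B} (hX : Measurable X)
    (hY : Measurable Y) (h : ∀ k, μ {ω | X ω = k} = μ {ω | Y ω = k}) :
    IdentDistrib X Y μ μ where
  aemeasurable_fst := hX.aemeasurable
  aemeasurable_snd := hY.aemeasurable
  map_eq := Measure.ext_of_singleton fun k => by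
    rw [Measure.map_apply hX (measurableSet_singleton k),
      Measure.map_apply hY (measurableSet_singleton k)]
    exact h k

lemma integral_comp_eq_sum [Fintype B] [IsFiniteMeasure μ] {X : Ω → B} (hX : Measurable X)
    (f : B → ℝ) :
    ∫ ω, f (X ω) ∂μ = ∑ k, μ.real {ω | X ω = k} * f k := by
  rw [← integral_map hX.aemeasurable (measurable_of_countable f).aestronglyMeasurable,
    integral_fintype Integrable.of_finite]
  refine sum_congr rfl fun k _ => ?_
  rw [measureReal_def, Measure.map_apply hX (measurableSet_singleton k), smul_eq_mul]
  rfl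

lemma ae_tendsto_empiricalMean_comp [Fintype B] [IsProbabilityMeasure μ] {o : ℕ → Ω → B}
    (hmeas : ∀ j, Measurable (o j)) (hindep : iIndepFun o μ)
    (hident : ∀ j, IdentDistrib (o j) (o 0) μ μ) (f : B → ℝ) :
    ∀ᵐ ω ∂μ, Tendsto (fun m => empiricalMean (fun j => f (o j ω)) m) atTop
      (𝓝 (∑ k, μ.real {ω | o 0 ω = k} * f k)) := by
  have hf : Measurable f := measurable_of_countable f
  have hint : Integrable (fun ω => f (o 0 ω)) μ :=
    (integrable_map_measure hf.aestronglyMeasurable (hmeas 0).aemeasurable).mp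
      Integrable.of_finite
  filter_upwards [strong_law_ae_real (fun j ω => f (o j ω)) hint
    (fun i j hij => (hindep.indepFun hij).comp hf hf) (fun j => (hident j).comp hf)] with ω hω
  rw [← integral_comp_eq_sum (hmeas 0)]
  simpa only [empiricalMean, one_div_mul_eq_div] using hω

end Probability

theorem stmt_17_general
    {B : Type*} [Fintype B] [MeasurableSpace B] [MeasurableSingletonClass B]
    (w : B → ℝ) (hw_pos : ∀ k, 0 < w k)
    (s g : B → ℝ) (a : ℝ) (ha : 0 < a) (b : ℝ)
    {Ω : Type*} [MeasurableSpace Ω] (μ : Measure Ω) [IsProbabilityMeasure μ]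
    (o : ℕ → Ω → B) (hmeas : ∀ j, Measurable (o j))
    (hindep : iIndepFun o μ)
    (hdist : ∀ j k, μ {ω | o j ω = k} = ENNReal.ofReal (w k)) :
    Tendsto (fun m : ℕ =>
        ∫ ω,
          (a * b + (1 / (m : ℝ)) *
              ∑ j ∈ Finset.range m, (Real.exp (s (o j ω)) / w (o j ω)) * g (o j ω)) /
            (a + (1 / (m : ℝ)) *
              ∑ j ∈ Finset.range m, Real.exp (s (o j ω)) / w (o j ω)) ∂μ)
      atTop
      (nhds ((a * b + ∑ k, Real.exp (s k) * g k) / (a + ∑ k, Real.exp (s k)))) := by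
  have hw : ∀ k, μ.real {ω | o 0 ω = k} = w k := fun k => by
    rw [measureReal_def, hdist, ENNReal.toReal_ofReal (hw_pos k).le]
  have hident : ∀ j, IdentDistrib (o j) (o 0) μ μ := fun j =>
    identDistrib_of_measure_eq (hmeas j) (hmeas 0) fun k => by rw [hdist, hdist]
  have hU := ae_tendsto_empiricalMean_comp hmeas hindep hident
    fun k => Real.exp (s k) / w k * g k
  have hV := ae_tendsto_empiricalMean_comp hmeas hindep hident fun k => Real.exp (s k) / w k
  simp only [hw, ← mul_assoc, mul_div_cancel₀ _ (hw_pos _).ne'] at hU hV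
  set M := |b| + ∑ k, |g k|
  have hbM : |b| ≤ M := le_add_of_nonneg_right (sum_nonneg fun k _ => abs_nonneg _)
  have hgM : ∀ k, |g k| ≤ M := fun k =>
    le_add_of_nonneg_of_le (abs_nonneg b) (single_le_sum (fun k _ => abs_nonneg (g k)) (mem_univ k))
  have hweight : ∀ k, 0 ≤ Real.exp (s k) / w k := fun k => by have := hw_pos k; positivity
  have hmean : ∀ (f : B → ℝ) m, Measurable fun ω => empiricalMean (fun j => f (o j ω)) m :=
    fun f => measurable_empiricalMean fun j => (measurable_of_countable f).comp (hmeas j)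
  have hlim := tendsto_integral_of_dominated_convergence (μ := μ) (fun _ => M)
    (f := fun _ => (a * b + ∑ k, Real.exp (s k) * g k) / (a + ∑ k, Real.exp (s k)))
    (fun m => (((hmean (fun k => Real.exp (s k) / w k * g k) m).const_add _).div
      ((hmean (fun k => Real.exp (s k) / w k) m).const_add _)).aestronglyMeasurable)
    (integrable_const M)
    (fun m => ae_of_all _ fun ω => abs_selfNormalizedRatio_le ha (fun j => hweight _) hbM
      (fun j => hgM _) m)
    (by
      filter_upwards [hU, hV] with ω hUω hVω
      exact (hUω.const_add _).div (hVω.const_add _) (by positivity))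
  rwa [integral_const, probReal_univ, one_smul] at hlim

/-- Asymptotic unbiasedness of the self-normalized sampled-softmax gradient estimator:
`E[U_m / V_m] → E[U] / E[V]` as the number `m` of resampled items grows, where
`U_m = a·b + (1/m) ∑_{j=1}^m (exp(s(o_j))/w(o_j))·g(o_j)` and
`V_m = a + (1/m) ∑_{j=1}^m exp(s(o_j))/w(o_j)`. -/
theorem stmt_17
    {B : Type*} [Fintype B] [Nonempty B] [MeasurableSpace B] [MeasurableSingletonClass B]
    (w : B → ℝ) (hw_pos : ∀ k, 0 < w k) (hw_sum : ∑ k, w k = 1)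
    (s g : B → ℝ) (a : ℝ) (ha : 0 < a) (b : ℝ)
    {Ω : Type*} [MeasurableSpace Ω] (μ : Measure Ω) [IsProbabilityMeasure μ]
    (o : ℕ → Ω → B) (hmeas : ∀ j, Measurable (o j))
    (hindep : iIndepFun o μ)
    (hdist : ∀ j k, μ {ω | o j ω = k} = ENNReal.ofReal (w k)) :
    Tendsto (fun m : ℕ =>
        ∫ ω,
          (a * b + (1 / (m : ℝ)) *
              ∑ j ∈ Finset.range m, (Real.exp (s (o j ω)) / w (o j ω)) * g (o j ω)) /
            (a + (1 / (m : ℝ)) *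
              ∑ j ∈ Finset.range m, Real.exp (s (o j ω)) / w (o j ω)) ∂μ)
      atTop
      (nhds ((a * b + ∑ k, Real.exp (s k) * g k) / (a + ∑ k, Real.exp (s k)))) :=
  stmt_17_general w hw_pos s g a ha b μ o hmeas hindep hdist
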